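/- arXiv:1701.02167 — 2 statements merged into one kernel-verified Lean document; each statement's English description precedes it below -/
import Mathlib

section
/- Let T > 0, let h : ℝ → ℝ be Lipschitz continuous with Lipschitz constant L, let α : [0,T] → ℝ be continuous with A := sup_{t∈[0,T]} |α(t)|, and let y₀, y₀' ∈ ℝ and Θ, Θ' : [0,T] → ℝ be càdlàg. If Y and Y' are càdlàg functions satisfying Y(t) = y₀ + (Θ(t) − Θ(0)) − ∫_0^t h(Y(s))·α(s) ds and Y'(t) = y₀' + (Θ'(t) − Θ'(0)) − ∫_0^t h(Y'(s))·α(s) ds for all t ∈ [0,T], then sup_{t∈[0,T]} |Y(t) − Y'(t)| ≤ (|y₀ − y₀'| + 2·sup_{t∈[0,T]} |Θ(t) − Θ'(t)|)·exp(L·A·T). In particular, the solution map Θ ↦ Y is continuous with respect to the supremum norm on càdlàg functions. -/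
/-!
Pointwise, the two drifts differ by at most `L A |Y − Y'|`, so `g = |Y − Y'|` satisfies
`g t ≤ |y₀ − y₀'| + 2 sup |Θ − Θ'| + L A ∫₀ᵗ g`, and Grönwall's inequality (applied to the
primitive of `g`, whose right derivative is `g` by right-continuity) gives the exponential bound.
The integral equations only carry information because càdlàg functions are integrable on `[0,T]`
(otherwise the integrals would be junk zeros): they are bounded by compactness, since every point
has one-sided limits, and measurable as pointwise limits of their values at dyadic points
approaching from the right.
-/

open Filter Set MeasureTheory Topology

noncomputable section

/-- A function `x : ℝ → ℝ` is càdlàg on `[0,T]`: right-continuous at every `t ∈ [0,T)`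
and with a (finite) left limit at every `t ∈ (0,T]`. -/
def Cadlag (T : ℝ) (x : ℝ → ℝ) : Prop :=
  (∀ t ∈ Set.Ico (0:ℝ) T, Filter.Tendsto x (nhdsWithin t (Set.Ici t)) (nhds (x t))) ∧
  (∀ t ∈ Set.Ioc (0:ℝ) T, ∃ L : ℝ, Filter.Tendsto x (nhdsWithin t (Set.Iio t)) (nhds L))

/-- `Y` is the market impact process on `[0,T]` driven by the càdlàg strategy `Θ`. -/
def ImpactSol (T : ℝ) (h α : ℝ → ℝ) (y₀ : ℝ) (Θ Y : ℝ → ℝ) : Prop :=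
  Cadlag T Y ∧ ∀ t ∈ Set.Icc (0:ℝ) T,
    Y t = y₀ + (Θ t - Θ 0) - ∫ s in (0:ℝ)..t, h (Y s) * α s

namespace Cadlag

variable {T : ℝ} {x y : ℝ → ℝ}

lemma continuousWithinAt_Icc_inter_Ici (hx : Cadlag T x) {t : ℝ} (ht : t ∈ Icc 0 T) :
    ContinuousWithinAt x (Icc 0 T ∩ Ici t) t := by
  rcases ht.2.lt_or_eq with htT | rfl
  · exact ContinuousWithinAt.mono (hx.1 t ⟨ht.1, htT⟩) inter_subset_right
  · exact continuousWithinAt_singleton.mono fun s hs => le_antisymm hs.1.2 hs.2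

lemma exists_tendsto_Icc_inter_Iio (hx : Cadlag T x) {t : ℝ} (ht : t ∈ Icc 0 T) :
    ∃ ℓ, Tendsto x (𝓝[Icc 0 T ∩ Iio t] t) (𝓝 ℓ) := by
  rcases ht.1.lt_or_eq with h0t | rfl
  · obtain ⟨ℓ, hℓ⟩ := hx.2 t ⟨h0t, ht.2⟩
    exact ⟨ℓ, hℓ.mono_left (nhdsWithin_mono _ inter_subset_right)⟩
  · refine ⟨0, ?_⟩
    have hempty : Icc 0 T ∩ Iio (0 : ℝ) = ∅ :=
      eq_empty_iff_forall_notMem.2 fun s hs => hs.1.1.not_gt hs.2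
    rw [hempty, nhdsWithin_empty]
    exact tendsto_bot

lemma comp {φ : ℝ → ℝ} (hx : Cadlag T x) (hφ : Continuous φ) : Cadlag T (fun s => φ (x s)) :=
  ⟨fun t ht => (hφ.tendsto _).comp (hx.1 t ht), fun t ht =>
    let ⟨ℓ, hℓ⟩ := hx.2 t ht
    ⟨φ ℓ, (hφ.tendsto _).comp hℓ⟩⟩

lemma comp₂ {φ : ℝ → ℝ → ℝ} (hx : Cadlag T x) (hy : Cadlag T y)
    (hφ : Continuous fun p : ℝ × ℝ => φ p.1 p.2) : Cadlag T (fun s => φ (x s) (y s)) :=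
  ⟨fun t ht => (hφ.tendsto (x t, y t)).comp ((hx.1 t ht).prodMk_nhds (hy.1 t ht)),
    fun t ht =>
    let ⟨ℓ, hℓ⟩ := hx.2 t ht
    let ⟨ℓ', hℓ'⟩ := hy.2 t ht
    ⟨φ ℓ ℓ', (hφ.tendsto (ℓ, ℓ')).comp (hℓ.prodMk_nhds hℓ')⟩⟩

lemma sub (hx : Cadlag T x) (hy : Cadlag T y) : Cadlag T (fun s => x s - y s) :=
  hx.comp₂ hy continuous_sub

lemma mul (hx : Cadlag T x) (hy : Cadlag T y) : Cadlag T (fun s => x s * y s) :=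
  hx.comp₂ hy continuous_mul

lemma exists_mem_nhdsWithin_isBounded_image (hx : Cadlag T x) {t : ℝ} (ht : t ∈ Icc 0 T) :
    ∃ U ∈ 𝓝[Icc 0 T] t, Bornology.IsBounded (x '' U) := by
  have bounded_near {l : Filter ℝ} {c : ℝ} (hc : Tendsto x l (𝓝 c)) :
      ∃ U ∈ l, Bornology.IsBounded (x '' U) :=
    ⟨x ⁻¹' Metric.ball c 1, hc (Metric.ball_mem_nhds c one_pos),
      Metric.isBounded_ball.subset (image_preimage_subset _ _)⟩
  obtain ⟨U, hU, hUb⟩ := bounded_near (hx.continuousWithinAt_Icc_inter_Ici ht)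
  obtain ⟨ℓ, hℓ⟩ := hx.exists_tendsto_Icc_inter_Iio ht
  obtain ⟨V, hV, hVb⟩ := bounded_near hℓ
  refine ⟨U ∪ V, ?_, by rw [image_union]; exact hUb.union hVb⟩
  rw [← inter_univ (Icc 0 T), ← Ici_union_Iio (a := t), inter_union_distrib_left, nhdsWithin_union]
  exact union_mem_sup hU hV

lemma isBounded_image (hx : Cadlag T x) : Bornology.IsBounded (x '' Icc 0 T) :=
  isCompact_Icc.induction_on (p := fun U => Bornology.IsBounded (x '' U))
    (by rw [image_empty]; exact Bornology.isBounded_empty)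
    (fun _ _ hst h => h.subset (image_mono hst))
    (fun _ _ hs ht => by rw [image_union]; exact hs.union ht)
    (fun _ ht => hx.exists_mem_nhdsWithin_isBounded_image ht)

lemma exists_abs_le (hx : Cadlag T x) : ∃ C, ∀ s ∈ Icc 0 T, |x s| ≤ C := by
  obtain ⟨C, hC⟩ := isBounded_iff_forall_norm_le.1 hx.isBounded_image
  exact ⟨C, fun s hs => hC _ (mem_image_of_mem x hs)⟩

lemma bddAbove_abs_image (hx : Cadlag T x) : BddAbove ((fun s => |x s|) '' Icc 0 T) := by
  obtain ⟨C, hC⟩ := hx.exists_abs_le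
  exact ⟨C, forall_mem_image.2 hC⟩

end Cadlag

lemma ContinuousOn.cadlag {T : ℝ} {α : ℝ → ℝ} (hα : ContinuousOn α (Icc 0 T)) : Cadlag T α :=
  ⟨fun _ ht => (hα.continuousWithinAt (Ico_subset_Icc_self ht)).mono_of_mem_nhdsWithin
      (Icc_mem_nhdsGE_of_mem ⟨ht.1, ht.2⟩),
    fun t ht => ⟨α t, (hα.continuousWithinAt (Ioc_subset_Icc_self ht)).mono_of_mem_nhdsWithin
      (Icc_mem_nhdsLT_of_mem ⟨ht.1, ht.2⟩)⟩⟩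

lemma tendsto_ceil_mul_two_pow_div_two_pow (t : ℝ) :
    Tendsto (fun n : ℕ => (⌈t * 2 ^ n⌉ : ℝ) / 2 ^ n) atTop (𝓝[≥] t) := by
  have h2n (n : ℕ) : (0 : ℝ) < 2 ^ n := by positivity
  have hge (n : ℕ) : t ≤ (⌈t * 2 ^ n⌉ : ℝ) / 2 ^ n := by
    rw [le_div_iff₀ (h2n n)]
    exact Int.le_ceil _
  have hle (n : ℕ) : (⌈t * 2 ^ n⌉ : ℝ) / 2 ^ n ≤ t + ((2 : ℝ) ^ n)⁻¹ := by
    rw [div_le_iff₀ (h2n n), add_mul, inv_mul_cancel₀ (h2n n).ne']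
    exact (Int.ceil_lt_add_one (t * 2 ^ n)).le
  have hlim : Tendsto (fun n : ℕ => t + ((2 : ℝ) ^ n)⁻¹) atTop (𝓝 t) := by
    simpa using (tendsto_const_nhds (x := t)).add
      (tendsto_inv_atTop_zero.comp (tendsto_pow_atTop_atTop_of_one_lt (one_lt_two (α := ℝ))))
  exact tendsto_nhdsWithin_of_tendsto_nhds_of_eventually_within _
    (tendsto_of_tendsto_of_tendsto_of_le_of_le tendsto_const_nhds hlim hge hle)
    (Eventually.of_forall hge)

lemma measurable_of_continuousWithinAt_Ici {β : Type*} [TopologicalSpace β]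
    [TopologicalSpace.PseudoMetrizableSpace β] [MeasurableSpace β] [BorelSpace β] {f : ℝ → β}
    (hf : ∀ t, ContinuousWithinAt f (Ici t) t) : Measurable f := by
  refine measurable_of_tendsto_metrizable (f := fun (n : ℕ) t => f (⌈t * 2 ^ n⌉ / 2 ^ n))
    (fun n => ?_) (tendsto_pi_nhds.2 fun t => (hf t).tendsto.comp ?_)
  · exact (measurable_from_top (f := fun k : ℤ => f (k / 2 ^ n))).comp
      (measurable_id.mul_const _).ceil
  · exact tendsto_ceil_mul_two_pow_div_two_pow t

namespace Cadlag

variable {T : ℝ} {x : ℝ → ℝ}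

lemma aestronglyMeasurable (hx : Cadlag T x) :
    AEStronglyMeasurable x (volume.restrict (Icc 0 T)) := by
  rcases lt_or_ge T 0 with hT | hT
  · rw [Icc_eq_empty (not_le.2 hT), Measure.restrict_empty]
    exact aestronglyMeasurable_zero_measure x
  have hright (t : ℝ) : ContinuousWithinAt (fun s => x (projIcc 0 T hT s)) (Ici t) t :=
    ContinuousWithinAt.comp (g := x) (f := fun s => (projIcc 0 T hT s : ℝ))
      (hx.continuousWithinAt_Icc_inter_Ici (projIcc 0 T hT t).2)
      (continuous_subtype_val.comp continuous_projIcc).continuousWithinAt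
      fun s hs => ⟨(projIcc 0 T hT s).2, monotone_projIcc hT hs⟩
  refine (measurable_of_continuousWithinAt_Ici hright).aestronglyMeasurable.congr ?_
  refine (ae_restrict_iff' measurableSet_Icc).2 (ae_of_all _ fun t ht => ?_)
  simp only [projIcc_of_mem hT ht]

lemma integrableOn (hx : Cadlag T x) : IntegrableOn x (Icc 0 T) := by
  obtain ⟨C, hC⟩ := hx.exists_abs_le
  exact ⟨hx.aestronglyMeasurable, .restrict_of_bounded (C := C) measure_Icc_lt_top
    ((ae_restrict_iff' measurableSet_Icc).2 (ae_of_all _ hC))⟩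

lemma intervalIntegrable (hx : Cadlag T x) {t : ℝ} (ht : t ∈ Icc 0 T) :
    IntervalIntegrable x volume 0 t :=
  (intervalIntegrable_iff_integrableOn_Icc_of_le ht.1).2
    (hx.integrableOn.mono_set (Icc_subset_Icc_right ht.2))

end Cadlag

lemma add_mul_gronwallBound_zero (K D t : ℝ) :
    D + K * gronwallBound 0 K D t = D * Real.exp (K * t) := by
  rcases eq_or_ne K 0 with rfl | hK
  · simp
  · rw [gronwallBound_of_K_ne_0 hK]
    field_simp
    ring

lemma le_mul_exp_of_le_add_mul_integral {g : ℝ → ℝ} {a b D K : ℝ} (hK : 0 ≤ K)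
    (hg : IntegrableOn g (Icc a b)) (hg_right : ∀ t ∈ Ico a b, ContinuousWithinAt g (Ici t) t)
    (hle : ∀ t ∈ Icc a b, g t ≤ D + K * ∫ s in a..t, g s) :
    ∀ t ∈ Icc a b, g t ≤ D * Real.exp (K * (t - a)) := by
  have hw_cont : ContinuousOn (fun t => ∫ s in a..t, g s) (Icc a b) :=
    (intervalIntegral.continuousOn_primitive hg).congr fun t ht =>
      intervalIntegral.integral_of_le ht.1
  have hw_deriv (t : ℝ) (ht : t ∈ Ico a b) :
      HasDerivWithinAt (fun t => ∫ s in a..t, g s) (g t) (Ici t) t :=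
    intervalIntegral.integral_hasDerivWithinAt_right
      ((intervalIntegrable_iff_integrableOn_Icc_of_le ht.1).2
        (hg.mono_set (Icc_subset_Icc_right ht.2.le)))
      ⟨Icc a b, Icc_mem_nhdsGT_of_mem ht, hg.aestronglyMeasurable⟩
      ((hg_right t ht).mono Ioi_subset_Ici_self)
  -- The primitive `w` of `g` has right derivative `g ≤ K w + D`: the differential Grönwall setting.
  have hw_le := le_gronwallBound_of_liminf_deriv_right_le (δ := 0) (K := K) (ε := D) hw_cont
    (fun t ht _ hr => (hw_deriv t ht).liminf_right_slope_le hr)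
    (by simp) (fun t ht => by linarith [hle t (Ico_subset_Icc_self ht)])
  intro t ht
  calc g t ≤ D + K * ∫ s in a..t, g s := hle t ht
    _ ≤ D + K * gronwallBound 0 K D (t - a) := by gcongr; exact hw_le t ht
    _ = D * Real.exp (K * (t - a)) := add_mul_gronwallBound_zero K D (t - a)

lemma ImpactSol.abs_sub_le {T A S : ℝ} {h α : ℝ → ℝ} {L : NNReal} {y₀ y₀' : ℝ}
    {Θ Θ' Y Y' : ℝ → ℝ} (hh : LipschitzWith L h) (hα : ContinuousOn α (Icc 0 T))
    (hαA : ∀ s ∈ Icc 0 T, |α s| ≤ A) (hS : ∀ s ∈ Icc 0 T, |Θ s - Θ' s| ≤ S)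
    (hY : ImpactSol T h α y₀ Θ Y) (hY' : ImpactSol T h α y₀' Θ' Y') {t : ℝ} (ht : t ∈ Icc 0 T) :
    |Y t - Y' t| ≤ |y₀ - y₀'| + 2 * S + L * A * ∫ s in (0 : ℝ)..t, |Y s - Y' s| := by
  have hint {Z : ℝ → ℝ} (hZ : Cadlag T Z) :
      IntervalIntegrable (fun s => h (Z s) * α s) volume 0 t :=
    ((hZ.comp hh.continuous).mul hα.cadlag).intervalIntegrable ht
  have hdiff : Y t - Y' t = (y₀ - y₀') + (Θ t - Θ' t) - (Θ 0 - Θ' 0)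
      - ∫ s in (0 : ℝ)..t, (h (Y s) * α s - h (Y' s) * α s) := by
    rw [intervalIntegral.integral_sub (hint hY.1) (hint hY'.1), hY.2 t ht, hY'.2 t ht]
    ring
  have hpoint (s : ℝ) (hs : s ∈ Icc 0 T) :
      ‖h (Y s) * α s - h (Y' s) * α s‖ ≤ L * A * |Y s - Y' s| := by
    rw [Real.norm_eq_abs, ← sub_mul, abs_mul, mul_right_comm]
    have hlip : |h (Y s) - h (Y' s)| ≤ L * |Y s - Y' s| := by
      simpa only [Real.dist_eq] using hh.dist_le_mul (Y s) (Y' s)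
    exact mul_le_mul hlip (hαA s hs) (abs_nonneg _) (by positivity)
  have hintegral : |∫ s in (0 : ℝ)..t, (h (Y s) * α s - h (Y' s) * α s)|
      ≤ L * A * ∫ s in (0 : ℝ)..t, |Y s - Y' s| := by
    calc _ ≤ ∫ s in (0 : ℝ)..t, L * A * |Y s - Y' s| :=
          intervalIntegral.norm_integral_le_of_norm_le ht.1
            (ae_of_all _ fun s hs => hpoint s ⟨hs.1.le, hs.2.trans ht.2⟩)
            ((((hY.1.sub hY'.1).comp continuous_abs).intervalIntegrable ht).const_mul _)
      _ = L * A * ∫ s in (0 : ℝ)..t, |Y s - Y' s| := intervalIntegral.integral_const_mul _ _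
  have h0 : (0 : ℝ) ∈ Icc 0 T := ⟨le_rfl, ht.1.trans ht.2⟩
  obtain ⟨hy_lo, hy_hi⟩ := abs_le.1 (le_refl |y₀ - y₀'|)
  obtain ⟨hΘt_lo, hΘt_hi⟩ := abs_le.1 (hS t ht)
  obtain ⟨hΘ0_lo, hΘ0_hi⟩ := abs_le.1 (hS 0 h0)
  obtain ⟨hI_lo, hI_hi⟩ := abs_le.1 hintegral
  rw [hdiff, abs_le]
  constructor <;> linarith

theorem impact_process_sup_norm_stability_general
    (T : ℝ) (h α : ℝ → ℝ) (L : NNReal)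
    (hh : LipschitzWith L h) (hα : ContinuousOn α (Set.Icc 0 T))
    (A : ℝ) (hA : A = sSup ((fun s => |α s|) '' Set.Icc (0:ℝ) T))
    (y₀ y₀' : ℝ) (Θ Θ' Y Y' : ℝ → ℝ)
    (hΘ : Cadlag T Θ) (hΘ' : Cadlag T Θ')
    (hY : ImpactSol T h α y₀ Θ Y) (hY' : ImpactSol T h α y₀' Θ' Y') :
    ∀ t ∈ Set.Icc (0:ℝ) T,
      |Y t - Y' t| ≤
        (|y₀ - y₀'| + 2 * sSup ((fun s => |Θ s - Θ' s|) '' Set.Icc (0:ℝ) T))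
          * Real.exp ((L : ℝ) * A * T) := by
  intro t ht
  have h0 : (0 : ℝ) ∈ Icc 0 T := ⟨le_rfl, ht.1.trans ht.2⟩
  set S := sSup ((fun s => |Θ s - Θ' s|) '' Icc (0 : ℝ) T)
  have hαA (s : ℝ) (hs : s ∈ Icc 0 T) : |α s| ≤ A :=
    hA ▸ le_csSup (isCompact_Icc.bddAbove_image hα.abs) (mem_image_of_mem _ hs)
  have hS (s : ℝ) (hs : s ∈ Icc 0 T) : |Θ s - Θ' s| ≤ S :=
    le_csSup (hΘ.sub hΘ').bddAbove_abs_image (mem_image_of_mem _ hs)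
  have hK : 0 ≤ (L : ℝ) * A := mul_nonneg L.coe_nonneg ((abs_nonneg _).trans (hαA 0 h0))
  have hD : 0 ≤ |y₀ - y₀'| + 2 * S := by
    linarith [abs_nonneg (y₀ - y₀'), (abs_nonneg _).trans (hS 0 h0)]
  have hg : Cadlag T (fun s => |Y s - Y' s|) := (hY.1.sub hY'.1).comp continuous_abs
  calc |Y t - Y' t|
      ≤ (|y₀ - y₀'| + 2 * S) * Real.exp (L * A * (t - 0)) :=
        le_mul_exp_of_le_add_mul_integral hK hg.integrableOn hg.1
          (fun s hs => ImpactSol.abs_sub_le hh hα hαA hS hY hY' hs) t ht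
    _ ≤ (|y₀ - y₀'| + 2 * S) * Real.exp (L * A * T) := by
        gcongr
        linarith [ht.2]

/-- Gronwall-type stability estimate for the impact process; with
`A = sup_{[0,T]} |α|`, solutions for data `(y₀, Θ)` and `(y₀', Θ')` satisfy
`sup_{[0,T]} |Y − Y'| ≤ (|y₀ − y₀'| + 2 sup_{[0,T]} |Θ − Θ'|) e^{L A T}`;
in particular the solution map is continuous in the supremum norm. -/
theorem impact_process_sup_norm_stability
    (T : ℝ) (hT : 0 < T) (h α : ℝ → ℝ) (L : NNReal)
    (hh : LipschitzWith L h) (hα : ContinuousOn α (Set.Icc 0 T))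
    (A : ℝ) (hA : A = sSup ((fun s => |α s|) '' Set.Icc (0:ℝ) T))
    (y₀ y₀' : ℝ) (Θ Θ' Y Y' : ℝ → ℝ)
    (hΘ : Cadlag T Θ) (hΘ' : Cadlag T Θ')
    (hY : ImpactSol T h α y₀ Θ Y) (hY' : ImpactSol T h α y₀' Θ' Y') :
    ∀ t ∈ Set.Icc (0:ℝ) T,
      |Y t - Y' t| ≤
        (|y₀ - y₀'| + 2 * sSup ((fun s => |Θ s - Θ' s|) '' Set.Icc (0:ℝ) T))
          * Real.exp ((L : ℝ) * A * T) :=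
  impact_process_sup_norm_stability_general T h α L hh hα A hA y₀ y₀' Θ Θ' Y Y' hΘ hΘ' hY hY'
end
end

section
/- Let T > 0 and let α, β, β_n (n ≥ 1) : [0,T] → ℝ be càdlàg with Σ_{t ∈ (0,T], Δα(t) ≠ 0} (Δα(t))² < ∞ (the sum over the countable set of jump times of α). Assume the β_n are uniformly bounded (there is K with |β_n(t)| ≤ K for all n, t) and that β_n(t) → β(t) as n → ∞ for every t ∈ (0,T] with Δα(t) ≠ 0. Let G : ℝ × ℝ → ℝ be twice continuously differentiable such that for every compact interval I ⊂ ℝ there exists L ≥ 0 with |G_{xx}(x,y) − G_{xx}(x,z)| ≤ L·|y − z| for all x, y, z ∈ I, where G_x and G_{xx} denote the first and second partial derivatives of G in its first argument. Define, for a bounded γ : [0,T] → ℝ, J(α,γ)(t) := Σ_{u ∈ (0,t], Δα(u) ≠ 0} [ G(α(u), γ(u)) − G(α(u−), γ(u)) − G_x(α(u−), γ(u))·Δα(u) ]. Then all these sums converge absolutely, and sup_{t∈[0,T]} |J(α,β_n)(t) − J(α,β)(t)| → 0 as n → ∞. -/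
open Filter Set MeasureTheory Topology

noncomputable section

/-- The left limit `x(t−)`, with the convention `x(0−) := x(0)`. -/
def leftVal (x : ℝ → ℝ) (t : ℝ) : ℝ := if t ≤ 0 then x 0 else Function.leftLim x t

/-- The jump `Δx(t) = x(t) − x(t−)` of a càdlàg path. -/
def jumpAt (x : ℝ → ℝ) (t : ℝ) : ℝ := x t - leftVal x t

/-!
At a jump time `u` the summand is the first-order Taylor remainder of `G(·, γ(u))` between
`α(u−)` and `α(u)`, so it is at most `M · Δα(u)²`, where `M` bounds `G_xx` on a square containing
the values of `α`, of its left limits and of the `βₙ` (a càdlàg function is bounded on `[0,T]`).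
Square-summability of the jumps gives absolute convergence, and since the summands converge
pointwise (`G` and `G_x` are continuous), dominated convergence for series gives
`Σ_u |termₙ(u) − term(u)| → 0`, which bounds the difference of the truncated sums for every `t`.
-/

theorem IsCompact.bddAbove_image_of_isBoundedUnder {X α : Type*} [TopologicalSpace X]
    [SemilatticeSup α] [Nonempty α] {s : Set X} {f : X → α} (hs : IsCompact s)
    (hf : ∀ x ∈ s, IsBoundedUnder (· ≤ ·) (𝓝[s] x) f) : BddAbove (f '' s) := by
  refine hs.induction_on (p := fun t => BddAbove (f '' t)) (by simp)
    (fun _ _ hst ht => ht.mono (image_mono hst))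
    (fun _ _ hs ht => by simpa only [image_union] using hs.union ht) fun x hx => ?_
  obtain ⟨b, hb⟩ := hf x hx
  exact ⟨{y | f y ≤ b}, hb, b, forall_mem_image.2 fun _ hy => hy⟩

namespace Cadlag

variable {T : ℝ} {a : ℝ → ℝ}

theorem isBoundedUnder_abs (ha : Cadlag T a) {t : ℝ} (ht : t ∈ Icc 0 T) :
    IsBoundedUnder (· ≤ ·) (𝓝[Icc 0 T] t) fun s => |a s| := by
  rw [← Ico_union_Icc_eq_Icc ht.1 ht.2, nhdsWithin_union, IsBoundedUnder, map_sup]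
  refine isBounded_sup ?_ ?_
  · rcases ht.1.eq_or_lt with rfl | h
    · simpa [isBounded_bot] using ⟨0⟩
    · obtain ⟨L, hL⟩ := ha.2 t ⟨h, ht.2⟩
      exact hL.abs.isBoundedUnder_le.mono (nhdsWithin_mono _ Ico_subset_Iio_self)
  · rcases ht.2.lt_or_eq with h | rfl
    · exact (ha.1 t ⟨ht.1, h⟩).abs.isBoundedUnder_le.mono
        (nhdsWithin_mono _ Icc_subset_Ici_self)
    · rw [Icc_self, nhdsWithin_singleton, map_pure]
      exact ⟨|a t|, eventually_pure.2 le_rfl⟩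

theorem exists_bound (ha : Cadlag T a) : ∃ C, ∀ s ∈ Icc 0 T, |a s| ≤ C :=
  (isCompact_Icc.bddAbove_image_of_isBoundedUnder fun _ ht => ha.isBoundedUnder_abs ht).imp
    fun _ hC _ hs => hC (mem_image_of_mem _ hs)

theorem tendsto_leftVal (ha : Cadlag T a) {u : ℝ} (hu : u ∈ Ioc 0 T) :
    Tendsto a (𝓝[<] u) (𝓝 (leftVal a u)) := by
  obtain ⟨L, hL⟩ := ha.2 u hu
  rwa [leftVal, if_neg hu.1.not_ge, leftLim_eq_of_tendsto hL]

theorem abs_leftVal_le (ha : Cadlag T a) {C : ℝ} (hC : ∀ s ∈ Icc 0 T, |a s| ≤ C) {u : ℝ}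
    (hu : u ∈ Ioc 0 T) : |leftVal a u| ≤ C := by
  refine le_of_tendsto (ha.tendsto_leftVal hu).abs ?_
  filter_upwards [Ioo_mem_nhdsLT hu.1] with s hs
  exact hC s ⟨hs.1.le, hs.2.le.trans hu.2⟩

end Cadlag

theorem abs_sub_sub_mul_sub_le {f f' f'' : ℝ → ℝ} {x₀ x₁ M : ℝ}
    (hf : ∀ x ∈ uIcc x₀ x₁, HasDerivAt f (f' x) x)
    (hf' : ∀ x ∈ uIcc x₀ x₁, HasDerivAt f' (f'' x) x)
    (hM : ∀ x ∈ uIcc x₀ x₁, |f'' x| ≤ M) :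
    |f x₁ - f x₀ - f' x₀ * (x₁ - x₀)| ≤ M * (x₁ - x₀) ^ 2 := by
  have hM₀ : 0 ≤ M := (abs_nonneg _).trans (hM x₀ left_mem_uIcc)
  have hf'_lip : ∀ x ∈ uIcc x₀ x₁, ‖f' x - f' x₀‖ ≤ M * |x₁ - x₀| := by
    intro x hx
    have hsub : uIcc x₀ x ⊆ uIcc x₀ x₁ := uIcc_subset_uIcc left_mem_uIcc hx
    calc ‖f' x - f' x₀‖ ≤ M * ‖x - x₀‖ :=
          (convex_uIcc x₀ x).norm_image_sub_le_of_norm_hasDerivWithin_le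
            (fun y hy => (hf' y (hsub hy)).hasDerivWithinAt) (fun y hy => hM y (hsub hy))
            left_mem_uIcc right_mem_uIcc
      _ ≤ M * |x₁ - x₀| := mul_le_mul_of_nonneg_left (abs_sub_left_of_mem_uIcc hx) hM₀
  have key := (convex_uIcc x₀ x₁).norm_image_sub_le_of_norm_hasDerivWithin_le
    (f := fun x => f x - f' x₀ * x)
    (fun x hx => ((hf x hx).sub ((hasDerivAt_id x).const_mul (f' x₀))).hasDerivWithinAt)
    (by simpa using hf'_lip) left_mem_uIcc right_mem_uIcc
  calc |f x₁ - f x₀ - f' x₀ * (x₁ - x₀)| = ‖f x₁ - f' x₀ * x₁ - (f x₀ - f' x₀ * x₀)‖ := by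
        rw [Real.norm_eq_abs]; ring_nf
    _ ≤ M * |x₁ - x₀| * ‖x₁ - x₀‖ := key
    _ = M * (x₁ - x₀) ^ 2 := by rw [Real.norm_eq_abs, mul_assoc, abs_mul_abs_self, sq]

theorem ContDiff.of_hasDerivAt_partial_fst {n : WithTop ℕ∞} {F F' : ℝ → ℝ → ℝ}
    (hF : ContDiff ℝ (n + 1) fun p : ℝ × ℝ => F p.1 p.2)
    (hF' : ∀ x y, HasDerivAt (fun x' => F x' y) (F' x y) x) :
    ContDiff ℝ n fun p : ℝ × ℝ => F' p.1 p.2 := by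
  have hF'_eq : (fun p : ℝ × ℝ => F' p.1 p.2) =
      fun p => fderiv ℝ (fun q : ℝ × ℝ => F q.1 q.2) p (1, 0) := by
    ext ⟨x, y⟩
    have h := ((hF.differentiable (by simp)) (x, y)).hasFDerivAt.comp_hasDerivAt x
      ((hasDerivAt_id' x).prodMk (hasDerivAt_const x y))
    exact (hF' x y).unique h
  rw [hF'_eq]
  exact (hF.fderiv_right le_rfl).clm_apply contDiff_const

def jumpTerm (G Gx : ℝ → ℝ → ℝ) (a c : ℝ → ℝ) (u : ℝ) : ℝ :=
  G (a u) (c u) - G (leftVal a u) (c u) - Gx (leftVal a u) (c u) * jumpAt a u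

section jumpTerm

variable {G Gx Gxx : ℝ → ℝ → ℝ} {a c : ℝ → ℝ} {u : ℝ}

theorem jumpTerm_of_jumpAt_eq_zero (h : jumpAt a u = 0) : jumpTerm G Gx a c u = 0 := by
  rw [jumpTerm, h, sub_eq_zero.1 h]
  ring

theorem abs_jumpTerm_le (hGx : ∀ x y, HasDerivAt (fun x' => G x' y) (Gx x y) x)
    (hGxx : ∀ x y, HasDerivAt (fun x' => Gx x' y) (Gxx x y) x) {M : ℝ}
    (hM : ∀ x ∈ uIcc (leftVal a u) (a u), |Gxx x (c u)| ≤ M) :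
    |jumpTerm G Gx a c u| ≤ M * jumpAt a u ^ 2 :=
  abs_sub_sub_mul_sub_le (fun x _ => hGx x (c u)) (fun x _ => hGxx x (c u)) hM

theorem tendsto_jumpTerm (hG : Continuous fun p : ℝ × ℝ => G p.1 p.2)
    (hGx : Continuous fun p : ℝ × ℝ => Gx p.1 p.2) {b : ℕ → ℝ → ℝ}
    (hb : jumpAt a u ≠ 0 → Tendsto (fun n => b n u) atTop (𝓝 (c u))) :
    Tendsto (fun n => jumpTerm G Gx a (b n) u) atTop (𝓝 (jumpTerm G Gx a c u)) := by
  by_cases h : jumpAt a u = 0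
  · simp only [jumpTerm_of_jumpAt_eq_zero h, tendsto_const_nhds]
  have hcont : Continuous fun y =>
      G (a u) y - G (leftVal a u) y - Gx (leftVal a u) y * jumpAt a u := by
    fun_prop
  exact (hcont.tendsto _).comp (hb h)

end jumpTerm

theorem abs_tsum_ite_sub_tsum_ite_le {ι : Type*} {f g : ι → ℝ} (hf : Summable f)
    (hg : Summable g) (p : ι → Prop) [DecidablePred p] :
    |(∑' i, if p i then f i else 0) - ∑' i, if p i then g i else 0| ≤ ∑' i, |f i - g i| := by
  have summable_ite {h : ι → ℝ} (hh : Summable h) : Summable fun i => if p i then h i else 0 :=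
    .of_norm_bounded hh.abs fun i => by split_ifs <;> simp
  rw [← (summable_ite hf).tsum_sub (summable_ite hg), ← Real.norm_eq_abs]
  refine tsum_of_norm_bounded (hf.sub hg).abs.hasSum fun i => ?_
  split_ifs <;> simp

theorem tendsto_tsum_abs_sub_of_dominated {ι : Type*} {F : ℕ → ι → ℝ} {F₀ w : ι → ℝ}
    (hw : Summable w) (hF : ∀ n i, |F n i| ≤ w i)
    (hlim : ∀ i, Tendsto (fun n => F n i) atTop (𝓝 (F₀ i))) :
    Tendsto (fun n => ∑' i, |F n i - F₀ i|) atTop (𝓝 0) := by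
  have hF₀ : ∀ i, |F₀ i| ≤ w i := fun i => le_of_tendsto' (hlim i).abs fun n => hF n i
  simpa using tendsto_tsum_of_dominated_convergence (bound := fun i => 2 * w i) (hw.mul_left 2)
    (fun i => ((hlim i).sub_const (F₀ i)).abs) (Eventually.of_forall fun n i => by
      rw [Real.norm_eq_abs, abs_abs]
      linarith [abs_sub (F n i) (F₀ i), hF n i, hF₀ i])

theorem jump_sum_uniform_convergence_general
    (T : ℝ)
    (a : ℝ → ℝ) (b : ℕ → ℝ → ℝ) (b₀ : ℝ → ℝ)
    (ha : Cadlag T a)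
    (hsum : Summable fun u : Set.Ioc (0:ℝ) T => (jumpAt a u) ^ 2)
    (K : ℝ) (hbd : ∀ n, ∀ t ∈ Set.Icc (0:ℝ) T, |b n t| ≤ K)
    (hconv : ∀ t ∈ Set.Ioc (0:ℝ) T, jumpAt a t ≠ 0 →
      Filter.Tendsto (fun n => b n t) Filter.atTop (nhds (b₀ t)))
    (G Gx Gxx : ℝ → ℝ → ℝ)
    (hG : ContDiff ℝ 2 fun pt : ℝ × ℝ => G pt.1 pt.2)
    (hGx : ∀ x y : ℝ, HasDerivAt (fun x' => G x' y) (Gx x y) x)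
    (hGxx : ∀ x y : ℝ, HasDerivAt (fun x' => Gx x' y) (Gxx x y) x) :
    (∀ n, Summable fun u : Set.Ioc (0:ℝ) T =>
      G (a u) (b n u) - G (leftVal a u) (b n u) - Gx (leftVal a u) (b n u) * jumpAt a u) ∧
    (Summable fun u : Set.Ioc (0:ℝ) T =>
      G (a u) (b₀ u) - G (leftVal a u) (b₀ u) - Gx (leftVal a u) (b₀ u) * jumpAt a u) ∧
    (∀ ε > (0:ℝ), ∃ N : ℕ, ∀ n ≥ N, ∀ t ∈ Set.Icc (0:ℝ) T,
      |(∑' u : Set.Ioc (0:ℝ) T, if (u : ℝ) ≤ t then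
            G (a u) (b n u) - G (leftVal a u) (b n u)
              - Gx (leftVal a u) (b n u) * jumpAt a u
          else 0)
        - (∑' u : Set.Ioc (0:ℝ) T, if (u : ℝ) ≤ t then
            G (a u) (b₀ u) - G (leftVal a u) (b₀ u)
              - Gx (leftVal a u) (b₀ u) * jumpAt a u
          else 0)| ≤ ε) := by
  have hGx_C1 : ContDiff ℝ 1 fun p : ℝ × ℝ => Gx p.1 p.2 :=
    ContDiff.of_hasDerivAt_partial_fst (n := 1) hG hGx
  have hGxx_cont : Continuous fun p : ℝ × ℝ => Gxx p.1 p.2 :=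
    (ContDiff.of_hasDerivAt_partial_fst (n := 0) hGx_C1 hGxx).continuous
  obtain ⟨C, hC⟩ := ha.exists_bound
  set R := max C K
  obtain ⟨M, hM⟩ := (isCompact_Icc.prod isCompact_Icc).exists_bound_of_continuousOn
    (s := Icc (-R) R ×ˢ Icc (-R) R) hGxx_cont.continuousOn
  have hbound : ∀ n (u : Ioc (0:ℝ) T), |jumpTerm G Gx a (b n) u| ≤ M * jumpAt a u ^ 2 := by
    intro n u
    have hu : (u : ℝ) ∈ Icc 0 T := Ioc_subset_Icc_self u.2
    have hx : uIcc (leftVal a u) (a u) ⊆ Icc (-R) R :=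
      uIcc_subset_Icc (abs_le.1 ((ha.abs_leftVal_le hC u.2).trans (le_max_left _ _)))
        (abs_le.1 ((hC u hu).trans (le_max_left _ _)))
    exact abs_jumpTerm_le hGx hGxx fun x hxI =>
      hM (x, b n u) ⟨hx hxI, abs_le.1 ((hbd n u hu).trans (le_max_right _ _))⟩
  have hlim (u : Ioc (0:ℝ) T) :
      Tendsto (fun n => jumpTerm G Gx a (b n) u) atTop (𝓝 (jumpTerm G Gx a b₀ u)) :=
    tendsto_jumpTerm hG.continuous hGx_C1.continuous (hconv u u.2)
  have hsummable : ∀ n, Summable fun u : Ioc (0:ℝ) T => jumpTerm G Gx a (b n) u :=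
    fun n => .of_norm_bounded (hsum.mul_left M) (hbound n)
  have hsummable₀ : Summable fun u : Ioc (0:ℝ) T => jumpTerm G Gx a b₀ u :=
    .of_norm_bounded (hsum.mul_left M) fun u => le_of_tendsto' (hlim u).norm (hbound · u)
  refine ⟨hsummable, hsummable₀, fun ε hε => ?_⟩
  obtain ⟨N, hN⟩ := eventually_atTop.1 <|
    (tendsto_tsum_abs_sub_of_dominated (hsum.mul_left M) hbound hlim).eventually_lt_const hε
  exact ⟨N, fun n hn t _ =>
    (abs_tsum_ite_sub_tsum_ite_le (hsummable n) hsummable₀ _).trans (hN n hn).le⟩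

/-- uniform convergence of the jump-sum functional
`J(α,γ)(t) = Σ_{u ≤ t} [G(α(u),γ(u)) − G(α(u−),γ(u)) − G_x(α(u−),γ(u))·Δα(u)]`
along a uniformly bounded sequence `βₙ` converging pointwise to `β` at the jump times
of `α`, for `α` with square-summable jumps and `G ∈ C²` whose second partial `G_{xx}`
in the first variable is Lipschitz in the second variable on compacts;
the sums converge absolutely and `sup_{[0,T]} |J(α,βₙ) − J(α,β)| → 0`. -/
theorem jump_sum_uniform_convergence
    (T : ℝ) (hT : 0 < T)
    (a : ℝ → ℝ) (b : ℕ → ℝ → ℝ) (b₀ : ℝ → ℝ)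
    (ha : Cadlag T a) (hb : ∀ n, Cadlag T (b n)) (hb₀ : Cadlag T b₀)
    (hsum : Summable fun u : Set.Ioc (0:ℝ) T => (jumpAt a u) ^ 2)
    (K : ℝ) (hbd : ∀ n, ∀ t ∈ Set.Icc (0:ℝ) T, |b n t| ≤ K)
    (hconv : ∀ t ∈ Set.Ioc (0:ℝ) T, jumpAt a t ≠ 0 →
      Filter.Tendsto (fun n => b n t) Filter.atTop (nhds (b₀ t)))
    (G Gx Gxx : ℝ → ℝ → ℝ)
    (hG : ContDiff ℝ 2 fun pt : ℝ × ℝ => G pt.1 pt.2)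
    (hGx : ∀ x y : ℝ, HasDerivAt (fun x' => G x' y) (Gx x y) x)
    (hGxx : ∀ x y : ℝ, HasDerivAt (fun x' => Gx x' y) (Gxx x y) x)
    (hLip : ∀ A B : ℝ, ∃ L : ℝ, 0 ≤ L ∧ ∀ x ∈ Set.Icc A B, ∀ y ∈ Set.Icc A B,
      ∀ z ∈ Set.Icc A B, |Gxx x y - Gxx x z| ≤ L * |y - z|) :
    (∀ n, Summable fun u : Set.Ioc (0:ℝ) T =>
      G (a u) (b n u) - G (leftVal a u) (b n u) - Gx (leftVal a u) (b n u) * jumpAt a u) ∧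
    (Summable fun u : Set.Ioc (0:ℝ) T =>
      G (a u) (b₀ u) - G (leftVal a u) (b₀ u) - Gx (leftVal a u) (b₀ u) * jumpAt a u) ∧
    (∀ ε > (0:ℝ), ∃ N : ℕ, ∀ n ≥ N, ∀ t ∈ Set.Icc (0:ℝ) T,
      |(∑' u : Set.Ioc (0:ℝ) T, if (u : ℝ) ≤ t then
            G (a u) (b n u) - G (leftVal a u) (b n u)
              - Gx (leftVal a u) (b n u) * jumpAt a u
          else 0)
        - (∑' u : Set.Ioc (0:ℝ) T, if (u : ℝ) ≤ t then
            G (a u) (b₀ u) - G (leftVal a u) (b₀ u)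
              - Gx (leftVal a u) (b₀ u) * jumpAt a u
          else 0)| ≤ ε) :=
  jump_sum_uniform_convergence_general T a b b₀ ha hsum K hbd hconv G Gx Gxx hG hGx hGxx
end
end
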